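/- arXiv:1303.4073 — 2 statements merged into one kernel-verified Lean document; each statement's English description precedes it below -/
import Mathlib

section
/- Let V = F_2^{2n} carry a quadratic form Q of plus type, and let D be an orthogonal dual hyperoval of rank n in V (all members totally singular) that splits over a totally singular n-dimensional subspace Y (i.e., V = X ⊕ Y for every X ∈ D). Then the set of singular vectors of V equals (∪_{X∈D} X) ∪ Y; in particular Y is the unique totally singular subspace over which D splits. -/
/-!
Fix `X ∈ D` and `0 ≠ x ∈ X`. As `Y` is totally singular, `Q (x + y) = polar Q x y` for `y ∈ Y`,
and `polar Q x` does not vanish on `Y` (it vanishes on `X`, and the polar form is nondegenerate).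
So the singular vectors of the coset `x + Y` form a coset of a hyperplane of `Y`: there are at
most `2 ^ (n - 1)` of them. Each of the `2 ^ n` members of `D` meets `x + Y` in a singular vector,
and no nonzero vector lies in three members of `D`, so these points make up at least `2 ^ (n - 1)`
singular vectors of `x + Y`, i.e. all of them. Splitting a singular vector as `x + y` along
`X ⊕ Y` then puts it in `Y` or in a member of `D`.

A totally singular complement `Y'` of the members of `D` meets each of them trivially, hence
lies in `Y`; two comparable complements of `X` coincide.
-/

open Module Submodule

theorem IsCompl.eq_of_le {α : Type*} [Lattice α] [BoundedOrder α] [IsModularLattice α]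
    {x y y' : α} (h : IsCompl x y) (h' : IsCompl x y') (hle : y' ≤ y) : y' = y :=
  eq_of_le_of_inf_le_of_sup_le (z := x) hle (h.symm.inf_eq_bot ▸ bot_le)
    (h'.symm.sup_eq_top ▸ le_top)

theorem Set.ncard_le_mul_ncard_image {α β : Type*} {s : Set α} (hs : s.Finite) (f : α → β)
    (m : ℕ) (hm : ∀ b ∈ f '' s, {a ∈ s | f a = b}.ncard ≤ m) : s.ncard ≤ m * (f '' s).ncard := by
  classical
  lift s to Finset α using hs
  rw [← Finset.coe_image, Set.ncard_coe_finset, Set.ncard_coe_finset]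
  refine Finset.card_le_mul_card_image s m fun b hb ↦ ?_
  simpa [← Finset.coe_filter] using hm b (by simpa using hb)

theorem Submodule.ncard_setOf_mem_le_two {R M : Type*} [Ring R] [AddCommGroup M] [Module R M]
    {D : Set (Submodule R M)}
    (h3 : ∀ X₁ ∈ D, ∀ X₂ ∈ D, ∀ X₃ ∈ D, X₁ ≠ X₂ → X₁ ≠ X₃ → X₂ ≠ X₃ → X₁ ⊓ X₂ ⊓ X₃ = ⊥)
    {w : M} (hw : w ≠ 0) : {X ∈ D | w ∈ X}.ncard ≤ 2 := by
  by_contra! h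
  obtain ⟨X₁, X₂, X₃, ⟨hX₁, hw₁⟩, ⟨hX₂, hw₂⟩, ⟨hX₃, hw₃⟩, h₁₂, h₁₃, h₂₃⟩ :=
    (Set.two_lt_ncard_iff (Set.finite_of_ncard_pos (by omega))).mp h
  have : w ∈ X₁ ⊓ X₂ ⊓ X₃ := ⟨⟨hw₁, hw₂⟩, hw₃⟩
  rw [h3 X₁ hX₁ X₂ hX₂ X₃ hX₃ h₁₂ h₁₃ h₂₃, mem_bot] at this
  exact hw this

theorem Submodule.card_inf_ker_le {K V : Type*} [Field K] [Finite K] [AddCommGroup V]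
    [Module K V] [FiniteDimensional K V] {Y : Submodule K V} {f : V →ₗ[K] K} {y : V}
    (hy : y ∈ Y) (hfy : f y ≠ 0) :
    Nat.card (Y ⊓ LinearMap.ker f : Submodule K V) ≤ Nat.card K ^ (finrank K Y - 1) := by
  have hlt : Y ⊓ LinearMap.ker f < Y := inf_le_left.lt_of_ne fun h ↦ hfy (h ▸ hy).2
  have := Submodule.finrank_lt_finrank_of_lt hlt
  rw [Module.natCard_eq_pow_finrank (K := K)]
  exact Nat.pow_le_pow_right Nat.card_pos (by omega)

namespace QuadraticMap

variable {R V N : Type*} [CommRing R] [AddCommGroup V] [Module R V] [AddCommGroup N] [Module R N]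

def IsTotallySingular (Q : QuadraticMap R V N) (W : Submodule R V) : Prop := ∀ w ∈ W, Q w = 0

variable {Q : QuadraticMap R V N}

theorem IsTotallySingular.polar_eq_zero {W : Submodule R V} (hW : IsTotallySingular Q W)
    {a b : V} (ha : a ∈ W) (hb : b ∈ W) : polar Q a b = 0 := by
  simp [polar, hW a ha, hW b hb, hW _ (W.add_mem ha hb)]

theorem IsTotallySingular.apply_add_eq {Y : Submodule R V} (hY : IsTotallySingular Q Y)
    (x : V) {y : V} (hy : y ∈ Y) : Q (x + y) = Q x + polar Q x y := by
  rw [polar, hY y hy]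
  abel

theorem IsTotallySingular.setOf_apply_eq_zero_sub_mem_eq {Y : Submodule R V}
    (hY : IsTotallySingular Q Y) {x : V} (hx : Q x = 0) :
    {w | Q w = 0 ∧ w - x ∈ Y} =
      (x + ·) '' (Y ⊓ LinearMap.ker (polarBilin Q x) : Submodule R V) := by
  ext w
  simp only [Set.mem_ofPred_eq, Set.mem_image, SetLike.mem_coe, mem_inf, LinearMap.mem_ker,
    polarBilin_apply_apply]
  constructor
  · rintro ⟨hw, hwY⟩
    refine ⟨w - x, ⟨hwY, ?_⟩, add_sub_cancel x w⟩
    simpa [hx, hw] using (hY.apply_add_eq x hwY).symm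
  · rintro ⟨y, ⟨hy, hxy⟩, rfl⟩
    exact ⟨by rw [hY.apply_add_eq x hy, hx, hxy, add_zero], by simpa using hy⟩

theorem exists_polar_ne_zero_of_codisjoint {Q : QuadraticForm R V}
    (hnd : (polarBilin Q).Nondegenerate) {X Y : Submodule R V} (hX : IsTotallySingular Q X)
    (hXY : Codisjoint X Y) {x : V} (hx : x ∈ X) (hx0 : x ≠ 0) : ∃ y ∈ Y, polar Q x y ≠ 0 := by
  by_contra! h
  refine hx0 (hnd.1 x fun w ↦ ?_)
  obtain ⟨a, b, ha, hb, rfl⟩ := codisjoint_iff_exists_add_eq.mp hXY w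
  simp [polarBilin_apply_apply, polar_add_right, hX.polar_eq_zero hx ha, h b hb]

end QuadraticMap

theorem QuadraticMap.IsTotallySingular.ncard_setOf_apply_eq_zero_sub_mem_le {K V : Type*}
    [Field K] [Finite K] [AddCommGroup V] [Module K V] [FiniteDimensional K V]
    {Q : QuadraticForm K V} {Y : Submodule K V} (hY : IsTotallySingular Q Y) {x y : V}
    (hx : Q x = 0) (hy : y ∈ Y) (hxy : polar Q x y ≠ 0) :
    {w | Q w = 0 ∧ w - x ∈ Y}.ncard ≤ Nat.card K ^ (finrank K Y - 1) := by
  rw [hY.setOf_apply_eq_zero_sub_mem_eq hx,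
    Set.ncard_image_of_injective _ (add_right_injective x)]
  exact card_inf_ker_le (f := polarBilin Q x) hy hxy

section DualHyperoval

open QuadraticMap

variable {n : ℕ} {V : Type*} [AddCommGroup V] [Module (ZMod 2) V] [FiniteDimensional (ZMod 2) V]
  {Q : QuadraticForm (ZMod 2) V} {D : Set (Submodule (ZMod 2) V)} {Y : Submodule (ZMod 2) V}

theorem mem_biUnion_of_apply_eq_zero_of_sub_mem (hnd : (polarBilin Q).Nondegenerate)
    (hcard : D.ncard = 2 ^ n) (hD : ∀ X ∈ D, IsTotallySingular Q X)
    (h3 : ∀ X₁ ∈ D, ∀ X₂ ∈ D, ∀ X₃ ∈ D, X₁ ≠ X₂ → X₁ ≠ X₃ → X₂ ≠ X₃ → X₁ ⊓ X₂ ⊓ X₃ = ⊥)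
    (hY : IsTotallySingular Q Y) (hYdim : finrank (ZMod 2) Y = n)
    (hsplit : ∀ X ∈ D, IsCompl X Y) {X : Submodule (ZMod 2) V} (hX : X ∈ D) {x : V}
    (hxX : x ∈ X) (hx0 : x ≠ 0) {v : V} (hv : Q v = 0) (hvx : v - x ∈ Y) :
    v ∈ ⋃ X ∈ D, (X : Set V) := by
  have : Finite V := Module.finite_of_finite (ZMod 2)
  have hDfin : D.Finite := Set.finite_of_ncard_pos (by rw [hcard]; positivity)
  by_contra hvD
  have hxY : x ∉ Y := fun h ↦ hx0 (disjoint_def.mp (hsplit X hX).disjoint x hxX h)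
  set S := {w | Q w = 0 ∧ w - x ∈ Y}
  obtain ⟨y, hy, hxy⟩ :=
    exists_polar_ne_zero_of_codisjoint hnd (hD X hX) (hsplit X hX).codisjoint hxX hx0
  have hS : S.ncard ≤ 2 ^ (n - 1) := by
    simpa [hYdim] using hY.ncard_setOf_apply_eq_zero_sub_mem_le (hD X hX x hxX) hy hxy
  have hproj : ∀ X' ∈ D, ∃ p, p ∈ X' ∧ x - p ∈ Y := fun X' hX' ↦ by
    obtain ⟨p, q, hp, hq, rfl⟩ := codisjoint_iff_exists_add_eq.mp (hsplit X' hX').codisjoint x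
    exact ⟨p, hp, by simpa using hq⟩
  choose! g hgX hgY using hproj
  have hgS : g '' D ⊆ S \ {v} := by
    rintro _ ⟨X', hX', rfl⟩
    refine ⟨⟨hD X' hX' _ (hgX X' hX'), by simpa using Y.neg_mem (hgY X' hX')⟩, ?_⟩
    rintro (h : g X' = v)
    exact hvD (Set.mem_biUnion hX' (h ▸ hgX X' hX'))
  have hfib : ∀ w ∈ g '' D, {X' ∈ D | g X' = w}.ncard ≤ 2 := by
    rintro _ ⟨X', hX', rfl⟩
    have hg0 : g X' ≠ 0 := fun h ↦ hxY (by simpa [h] using hgY X' hX')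
    have hsub : {Z ∈ D | g Z = g X'} ⊆ {Z ∈ D | g X' ∈ Z} :=
      fun Z hZ ↦ ⟨hZ.1, hZ.2 ▸ hgX Z hZ.1⟩
    exact (Set.ncard_le_ncard hsub (hDfin.subset fun Z hZ ↦ hZ.1)).trans
      (ncard_setOf_mem_le_two h3 hg0)
  have hvS : v ∈ S := show Q v = 0 ∧ v - x ∈ Y from ⟨hv, hvx⟩
  have hcount := calc 2 ^ n = D.ncard := hcard.symm
    _ ≤ 2 * (g '' D).ncard := Set.ncard_le_mul_ncard_image hDfin g 2 hfib
    _ ≤ 2 * (S \ {v}).ncard := by gcongr; exact Set.toFinite _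
    _ = 2 * (S.ncard - 1) := by rw [Set.ncard_sdiff_singleton_of_mem hvS]
  have hpow : 2 * 2 ^ (n - 1) ≤ 2 ^ n + 1 := by cases n <;> simp [pow_succ, mul_comm]
  have hpos := Nat.one_le_two_pow (n := n)
  omega

end DualHyperoval

theorem orthogonal_DHO_split_singular_set_general
    (n : ℕ)
    (V : Type*) [AddCommGroup V] [Module (ZMod 2) V] [FiniteDimensional (ZMod 2) V]
    (Q : QuadraticForm (ZMod 2) V)
    (hnd : (QuadraticMap.polarBilin Q).Nondegenerate)
    (D : Set (Submodule (ZMod 2) V))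
    (hcard : D.ncard = 2 ^ n)
    (hmem : ∀ X ∈ D, Module.finrank (ZMod 2) X = n ∧ ∀ x ∈ X, Q x = 0)
    (h3 : ∀ X₁ ∈ D, ∀ X₂ ∈ D, ∀ X₃ ∈ D,
      X₁ ≠ X₂ → X₁ ≠ X₃ → X₂ ≠ X₃ → X₁ ⊓ X₂ ⊓ X₃ = ⊥)
    (Y : Submodule (ZMod 2) V)
    (hYsing : ∀ y ∈ Y, Q y = 0) (hYdim : Module.finrank (ZMod 2) Y = n)
    (hsplit : ∀ X ∈ D, IsCompl X Y) :
    {v : V | Q v = 0} = (⋃ X ∈ D, (X : Set V)) ∪ (Y : Set V) ∧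
    ∀ Y' : Submodule (ZMod 2) V, (∀ y ∈ Y', Q y = 0) →
      (∀ X ∈ D, IsCompl X Y') → Y' = Y := by
  have hD : ∀ X ∈ D, QuadraticMap.IsTotallySingular Q X := fun X hX ↦ (hmem X hX).2
  obtain ⟨X₀, hX₀⟩ := Set.nonempty_of_ncard_ne_zero (by rw [hcard]; positivity : D.ncard ≠ 0)
  have hsing : {v : V | Q v = 0} = (⋃ X ∈ D, (X : Set V)) ∪ (Y : Set V) := by
    refine Set.Subset.antisymm (fun v hv ↦ ?_) (Set.union_subset ?_ hYsing)
    · obtain ⟨x, y, hx, hy, rfl⟩ :=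
        codisjoint_iff_exists_add_eq.mp (hsplit X₀ hX₀).codisjoint v
      by_cases hx0 : x = 0
      · exact .inr (by simpa [hx0] using hy)
      · exact .inl (mem_biUnion_of_apply_eq_zero_of_sub_mem hnd hcard hD h3 hYsing hYdim hsplit
          hX₀ hx hx0 hv (by simpa using hy))
    · exact Set.iUnion₂_subset hD
  refine ⟨hsing, fun Y' hY' hsplit' ↦ (hsplit X₀ hX₀).eq_of_le (hsplit' X₀ hX₀) fun y hy ↦ ?_⟩
  rcases hsing.subset (hY' y hy) with h | h
  · obtain ⟨X, hX, hyX⟩ := Set.mem_iUnion₂.mp h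
    rw [disjoint_def.mp (hsplit' X hX).disjoint y hyX hy]
    exact Y.zero_mem
  · exact h

/-- If an orthogonal dual hyperoval `D` of rank `n` in `V⁺(2n,2)` splits over
a totally singular subspace `Y`, then the singular vectors of `V` are exactly
`(⋃ D) ∪ Y`; in particular `Y` is the unique totally singular subspace over
which `D` splits. -/
theorem orthogonal_DHO_split_singular_set
    (n : ℕ) (hn : 2 < n)
    (V : Type*) [AddCommGroup V] [Module (ZMod 2) V] [FiniteDimensional (ZMod 2) V]
    (hdim : Module.finrank (ZMod 2) V = 2 * n)
    (Q : QuadraticForm (ZMod 2) V)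
    (hnd : (QuadraticMap.polarBilin Q).Nondegenerate)
    (D : Set (Submodule (ZMod 2) V))
    (hcard : D.ncard = 2 ^ n)
    (hmem : ∀ X ∈ D, Module.finrank (ZMod 2) X = n ∧ ∀ x ∈ X, Q x = 0)
    (h2 : ∀ X₁ ∈ D, ∀ X₂ ∈ D, X₁ ≠ X₂ →
      Module.finrank (ZMod 2) (X₁ ⊓ X₂ : Submodule (ZMod 2) V) = 1)
    (h3 : ∀ X₁ ∈ D, ∀ X₂ ∈ D, ∀ X₃ ∈ D,
      X₁ ≠ X₂ → X₁ ≠ X₃ → X₂ ≠ X₃ → X₁ ⊓ X₂ ⊓ X₃ = ⊥)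
    (Y : Submodule (ZMod 2) V)
    (hYsing : ∀ y ∈ Y, Q y = 0) (hYdim : Module.finrank (ZMod 2) Y = n)
    (hsplit : ∀ X ∈ D, IsCompl X Y) :
    {v : V | Q v = 0} = (⋃ X ∈ D, (X : Set V)) ∪ (Y : Set V) ∧
    ∀ Y' : Submodule (ZMod 2) V, (∀ y ∈ Y', Q y = 0) →
      (∀ X ∈ D, IsCompl X Y') → Y' = Y :=
  orthogonal_DHO_split_singular_set_general n V Q hnd D hcard hmem h3 Y hYsing hYdim hsplit
end

section
/- Let U be an F_q-space (q even) with nondegenerate symmetric bilinear form b. If T and S are self-adjoint operators with T + E_{a,a} and S + E_{b,b} skew-symmetric, then E_{a+b,a+b} is the unique rank ≤ 1 self-adjoint operator R' with T + S + R' skew-symmetric. -/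
/-- The rank-one operator `x ↦ b(x,a) • c`. -/
def Eop {F U : Type*} [Field F] [AddCommGroup U] [Module F U]
    (B : LinearMap.BilinForm F U) (a c : U) : U →ₗ[F] U :=
  (B.flip a).smulRight c

/-- `T` is self-adjoint with respect to `B`. -/
def IsSelfAdjOp {F U : Type*} [Field F] [AddCommGroup U] [Module F U]
    (B : LinearMap.BilinForm F U) (T : U →ₗ[F] U) : Prop :=
  ∀ x y : U, B (T x) y = B x (T y)

/-- `T` is skew-symmetric (alternating) with respect to `B`. -/
def IsSkewOp {F U : Type*} [Field F] [AddCommGroup U] [Module F U]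
    (B : LinearMap.BilinForm F U) (T : U →ₗ[F] U) : Prop :=
  ∀ x : U, B x (T x) = 0

/-! The identity `E_{a+b,a+b} = E_{a,a} + E_{b,b} + (E_{a,b} + E_{b,a})` reduces the first claim
to the skew-symmetry of `E_{a,b} + E_{b,a}`, which is `x ↦ 2 b(x,a) b(x,b)` on the diagonal and
so vanishes in characteristic 2. For uniqueness, `R' - E_{a+b,a+b}` is skew-symmetric as a
difference of skew-symmetric operators; a self-adjoint operator of rank at most one is
`l • E_{v,v}`, and `l b(x,v)^2 = b(x,a+b)^2` for all `x` forces `l • E_{v,v} = E_{a+b,a+b}`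
because squaring is injective in characteristic 2. -/

section

variable {F U : Type*} [Field F] [AddCommGroup U] [Module F U] {B : LinearMap.BilinForm F U}

@[simp]
theorem Eop_apply (a c x : U) : Eop B a c x = B x a • c := rfl

theorem IsSkewOp.add {T S : U →ₗ[F] U} (hT : IsSkewOp B T) (hS : IsSkewOp B S) :
    IsSkewOp B (T + S) := fun x => by
  rw [LinearMap.add_apply, map_add, hT x, hS x, add_zero]

theorem IsSkewOp.sub {T S : U →ₗ[F] U} (hT : IsSkewOp B T) (hS : IsSkewOp B S) :
    IsSkewOp B (T - S) := fun x => by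
  rw [LinearMap.sub_apply, map_sub, hT x, hS x, sub_zero]

theorem Eop_add_add (a b : U) :
    Eop B (a + b) (a + b) = Eop B a a + Eop B b b + (Eop B a b + Eop B b a) := by
  ext x
  simp only [Eop_apply, LinearMap.add_apply, map_add, add_smul, smul_add]
  abel

theorem isSkewOp_Eop_add_Eop_swap [CharP F 2] (a b : U) :
    IsSkewOp B (Eop B a b + Eop B b a) := fun x => by
  simp only [LinearMap.add_apply, Eop_apply, map_add, map_smul, smul_eq_mul, mul_comm (B x b)]
  exact CharTwo.add_self_eq_zero _

theorem IsSelfAdjOp.exists_eq_smul_Eop [FiniteDimensional F U] (hB : B.SeparatingLeft)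
    {R : U →ₗ[F] U} (hR : IsSelfAdjOp B R)
    (hrank : Module.finrank F (LinearMap.range R) ≤ 1) :
    ∃ (l : F) (v : U), R = l • Eop B v v := by
  obtain ⟨v, hv⟩ := ((LinearMap.range R).finrank_le_one_iff_isPrincipal.mp hrank).principal
  have ht : ∀ x, ∃ t : F, R x = t • v := fun x => by
    obtain ⟨t, ht⟩ := Submodule.mem_span_singleton.mp (hv ▸ LinearMap.mem_range_self R x)
    exact ⟨t, ht.symm⟩
  choose t ht using ht
  by_cases hv0 : ∀ y, B v y = 0
  · refine ⟨0, v, LinearMap.ext fun x => ?_⟩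
    rw [ht, hB v hv0, smul_zero, zero_smul, LinearMap.zero_apply]
  push Not at hv0
  obtain ⟨y, hy⟩ := hv0
  refine ⟨t y / B v y, v, LinearMap.ext fun x => ?_⟩
  have hxy := hR x y
  rw [ht, ht, map_smul, map_smul, LinearMap.smul_apply, smul_eq_mul, smul_eq_mul] at hxy
  rw [ht, LinearMap.smul_apply, Eop_apply, smul_smul, div_mul_eq_mul_div,
    ← eq_div_iff hy |>.mpr hxy]

theorem smul_Eop_eq_Eop_of_forall_sq [CharP F 2] (hB : B.SeparatingRight) {l : F} {v c : U}
    (h : ∀ x, l * B x v ^ 2 = B x c ^ 2) : l • Eop B v v = Eop B c c := by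
  by_cases hv : ∀ x, B x v = 0
  · ext x
    have hc : B x c = 0 := by simpa [hv x] using (h x).symm
    simp [hv x, hc]
  push Not at hv
  obtain ⟨x₀, hx₀⟩ := hv
  set μ := B x₀ c / B x₀ v
  have hl : l = μ ^ 2 := by
    rw [div_pow, eq_div_iff (pow_ne_zero 2 hx₀), h]
  have hc : c = μ • v := by
    refine (sub_eq_zero.mp (hB _ fun x => ?_)).symm
    rw [map_sub, map_smul, smul_eq_mul, sub_eq_zero, ← CharTwo.sq_inj, mul_pow, ← hl, h]
  ext x
  simp only [LinearMap.smul_apply, Eop_apply, hc, map_smul, smul_smul, smul_eq_mul, hl]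
  congr 1
  ring

theorem IsSelfAdjOp.eq_Eop_of_isSkewOp_sub [CharP F 2] [FiniteDimensional F U]
    (hB : B.Nondegenerate) {R : U →ₗ[F] U} (hR : IsSelfAdjOp B R)
    (hrank : Module.finrank F (LinearMap.range R) ≤ 1) {c : U}
    (hskew : IsSkewOp B (R - Eop B c c)) :
    R = Eop B c c := by
  obtain ⟨l, v, rfl⟩ := hR.exists_eq_smul_Eop hB.1 hrank
  refine smul_Eop_eq_Eop_of_forall_sq hB.2 fun x => ?_
  have hx := hskew x
  simp only [LinearMap.sub_apply, LinearMap.smul_apply, Eop_apply, map_sub, map_smul,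
    smul_eq_mul, sub_eq_zero] at hx
  linear_combination hx

end

theorem correction_of_sum_general
    (F U : Type*) [Field F] [CharP F 2]
    [AddCommGroup U] [Module F U] [FiniteDimensional F U]
    (B : LinearMap.BilinForm F U) (hnd : B.Nondegenerate)
    (T S : U →ₗ[F] U)
    (a b : U) (hTa : IsSkewOp B (T + Eop B a a)) (hSb : IsSkewOp B (S + Eop B b b)) :
    IsSkewOp B (T + S + Eop B (a + b) (a + b)) ∧
    ∀ R' : U →ₗ[F] U, IsSelfAdjOp B R' →
      Module.finrank F (LinearMap.range R') ≤ 1 →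
      IsSkewOp B (T + S + R') → R' = Eop B (a + b) (a + b) := by
  have hsum : IsSkewOp B (T + S + Eop B (a + b) (a + b)) := by
    convert (hTa.add hSb).add (isSkewOp_Eop_add_Eop_swap a b) using 1
    rw [Eop_add_add]
    abel
  refine ⟨hsum, fun R' hR' hrank hskew => hR'.eq_Eop_of_isSkewOp_sub hnd hrank ?_⟩
  convert hskew.sub hsum using 1
  abel

/-- If `T + E_{a,a}` and `S + E_{b,b}` are skew-symmetric, then `E_{a+b,a+b}`
is the unique self-adjoint operator of rank at most 1 making `T + S`
skew-symmetric after correction. -/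
theorem correction_of_sum
    (F U : Type*) [Field F] [Fintype F] [CharP F 2]
    [AddCommGroup U] [Module F U] [FiniteDimensional F U]
    (B : LinearMap.BilinForm F U) (hsymm : B.IsSymm) (hnd : B.Nondegenerate)
    (T S : U →ₗ[F] U) (hT : IsSelfAdjOp B T) (hS : IsSelfAdjOp B S)
    (a b : U) (hTa : IsSkewOp B (T + Eop B a a)) (hSb : IsSkewOp B (S + Eop B b b)) :
    IsSkewOp B (T + S + Eop B (a + b) (a + b)) ∧
    ∀ R' : U →ₗ[F] U, IsSelfAdjOp B R' →
      Module.finrank F (LinearMap.range R') ≤ 1 →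
      IsSkewOp B (T + S + R') → R' = Eop B (a + b) (a + b) :=
  correction_of_sum_general F U B hnd T S a b hTa hSb
end
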